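/- arXiv:2109.14599 — 4 statements merged into one kernel-verified Lean document; each statement's English description precedes it below -/
import Mathlib

section
/- Let T be a bipartite graph with parts V_Q of size n and V_S of size r, and let T̄ be the graph on V_Q where q_i and q_j are adjacent iff they have a common neighbor in T. Then for every ε ∈ [0,1], the local Cheeger constant satisfies h_{ε'}(T̄) ≥ h_ε(T) / deg(T), where ε' = (n+r)·ε / ((1+deg(T))·n) and deg(T) is the maximum degree of T. -/
/-!
Let `L ⊆ V_Q` be admissible for `h_{ε'}(T̄)` and let `N(L) ⊆ V_S` be its neighbourhood in `T`.
We test `h_ε(T)` on `L ∪ N(L)`: it has at most `(1 + Δ)|L| ≤ ε|V|/2` vertices, and by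
bipartiteness each of its boundary edges joins some `s ∈ N(L)` to some `q ∉ L`. Charging such an
edge to the `T̄`-edge `{q', q}`, for a neighbour `q' ∈ L` of `s`, charges every boundary edge of `L`
in `T̄` at most `Δ` times, because all edges charged to it contain its endpoint outside `L`.
-/

attribute [local instance] Classical.propDecidable

open Finset
open scoped ENNReal

/-- The contracted graph of a bipartite (Tanner) graph `T` on `V_Q ⊕ V_S`:
two vertices of `V_Q` are adjacent iff they are at distance two in `T`,
i.e. they share a common neighbor in `V_S`. -/
def contractedGraph {VQ VS : Type*} (T : SimpleGraph (VQ ⊕ VS)) : SimpleGraph VQ where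
  Adj q q' := q ≠ q' ∧ ∃ s : VS, T.Adj (Sum.inl q) (Sum.inr s) ∧ T.Adj (Sum.inl q') (Sum.inr s)
  symm := by
    constructor
    rintro a b ⟨hne, s, h1, h2⟩
    exact ⟨hne.symm, s, h2, h1⟩
  loopless := by
    constructor
    rintro a ⟨hne, -⟩
    exact hne rfl

/-- The set of edges of `G` with exactly one endpoint in `L`. -/
noncomputable def edgeBoundary {V : Type*} [Fintype V] (G : SimpleGraph V) (L : Finset V) :
    Finset (Sym2 V) :=
  Finset.univ.filter (fun e => e ∈ G.edgeSet ∧ ∃ a b, e = s(a, b) ∧ a ∈ L ∧ b ∉ L)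

/-- The local Cheeger constant `h_ε(G) = min_{L ⊆ V, |L| ≤ ε|V|/2} |∂L|/|L|`,
valued in `ℝ≥0∞` (it is `⊤` when no nonempty admissible `L` exists). -/
noncomputable def localCheeger {V : Type*} [Fintype V] (G : SimpleGraph V) (ε : ℝ) : ℝ≥0∞ :=
  sInf {x : ℝ≥0∞ | ∃ L : Finset V, L.Nonempty ∧ ((L.card : ℝ) ≤ ε * (Fintype.card V) / 2) ∧
    x = ((edgeBoundary G L).card : ℝ≥0∞) / (L.card : ℝ≥0∞)}

section Tanner

variable {VQ VS : Type*} [Fintype VQ] [Fintype VS] (T : SimpleGraph (VQ ⊕ VS))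

noncomputable def inrNeighborFinset (L : Finset VQ) : Finset VS :=
  univ.filter fun s => ∃ q ∈ L, T.Adj (Sum.inl q) (Sum.inr s)

variable {T}

lemma card_filter_adj_inr_le (v : VQ ⊕ VS) :
    #(univ.filter fun s : VS => T.Adj v (Sum.inr s)) ≤ #(univ.filter fun u => T.Adj v u) :=
  card_le_card_of_injOn Sum.inr (fun s hs => by simpa using hs) Sum.inr_injective.injOn

lemma card_inrNeighborFinset_le {Δ : ℕ} (hΔ : ∀ v, #(univ.filter fun u => T.Adj v u) ≤ Δ)
    (L : Finset VQ) : #(inrNeighborFinset T L) ≤ #L * Δ := by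
  have hsub : inrNeighborFinset T L ⊆
      L.biUnion fun q => univ.filter fun s : VS => T.Adj (Sum.inl q) (Sum.inr s) := by
    intro s hs
    obtain ⟨q, hq, hadj⟩ := (mem_filter.mp hs).2
    exact mem_biUnion.mpr ⟨q, hq, by simpa using hadj⟩
  exact (card_le_card hsub).trans <| card_biUnion_le_card_mul _ _ _ fun q _ =>
    (card_filter_adj_inr_le _).trans (hΔ _)

lemma card_disjSum_inrNeighborFinset_le {Δ : ℕ}
    (hΔ : ∀ v, #(univ.filter fun u => T.Adj v u) ≤ Δ) (L : Finset VQ) :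
    #(L.disjSum (inrNeighborFinset T L)) ≤ (1 + Δ) * #L := by
  rw [card_disjSum]
  linarith [card_inrNeighborFinset_le hΔ L]

lemma exists_of_mem_edgeBoundary_disjSum (hbip : ∀ a b, T.Adj a b → a.isLeft = b.isRight)
    {L : Finset VQ} {e : Sym2 (VQ ⊕ VS)}
    (he : e ∈ edgeBoundary T (L.disjSum (inrNeighborFinset T L))) :
    ∃ q s, e = s(Sum.inl q, Sum.inr s) ∧ T.Adj (Sum.inl q) (Sum.inr s) ∧ q ∉ L ∧
      ∃ q' ∈ L, T.Adj (Sum.inl q') (Sum.inr s) := by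
  simp only [edgeBoundary, mem_filter, mem_univ, true_and] at he
  obtain ⟨hadj, a, b, rfl, ha, hb⟩ := he
  rw [SimpleGraph.mem_edgeSet] at hadj
  have hlr := hbip a b hadj
  rcases a with q | s <;> rcases b with q' | s'
  · simp at hlr
  · refine absurd (inr_mem_disjSum.mpr (mem_filter.mpr ⟨mem_univ _, q, ?_, hadj⟩)) hb
    exact inl_mem_disjSum.mp ha
  · obtain ⟨q, hq, hq'⟩ := (mem_filter.mp (inr_mem_disjSum.mp ha)).2
    exact ⟨q', s, Sym2.eq_swap, hadj.symm, fun h => hb (inl_mem_disjSum.mpr h), q, hq, hq'⟩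
  · simp at hlr

lemma card_edgeBoundary_disjSum_le (hbip : ∀ a b, T.Adj a b → a.isLeft = b.isRight)
    {Δ : ℕ} (hΔ : ∀ v, #(univ.filter fun u => T.Adj v u) ≤ Δ) (L : Finset VQ) :
    #(edgeBoundary T (L.disjSum (inrNeighborFinset T L))) ≤
      Δ * #(edgeBoundary (contractedGraph T) L) := by
  have key := card_mul_le_card_mul (m := 1) (n := Δ)
    (s := edgeBoundary T (L.disjSum (inrNeighborFinset T L)))
    (t := edgeBoundary (contractedGraph T) L)
    (fun e e' => ∃ q s, e = s(Sum.inl q, Sum.inr s) ∧ T.Adj (Sum.inl q) (Sum.inr s) ∧ q ∉ L ∧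
      ∃ q', e' = s(q', q)) ?_ ?_
  · linarith
  · intro e he
    obtain ⟨q, s, rfl, hadj, hq, q', hq', hadj'⟩ := exists_of_mem_edgeBoundary_disjSum hbip he
    refine card_pos.mpr ⟨s(q', q), (mem_bipartiteAbove _).mpr ⟨?_, q, s, rfl, hadj, hq, q', rfl⟩⟩
    simp only [edgeBoundary, mem_filter, mem_univ, true_and]
    exact ⟨⟨fun h : q' = q => hq (h ▸ hq'), s, hadj', hadj⟩, q', q, rfl, hq', hq⟩
  · intro e' he'
    simp only [edgeBoundary, mem_filter, mem_univ, true_and] at he'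
    obtain ⟨-, a, b, rfl, ha, hb⟩ := he'
    refine (card_le_card (t := (univ.filter fun s : VS => T.Adj (Sum.inl b) (Sum.inr s)).image
        fun s => s(Sum.inl b, Sum.inr s)) ?_).trans <|
      card_image_le.trans <| (card_filter_adj_inr_le _).trans (hΔ _)
    intro e he
    obtain ⟨-, q, s, rfl, hadj, hq, q', he'⟩ := (mem_bipartiteBelow _).mp he
    obtain rfl : q = b := by
      rcases Sym2.eq_iff.mp he' with ⟨-, rfl⟩ | ⟨rfl, -⟩
      · rfl
      · exact absurd ha hq
    exact mem_image.mpr ⟨s, by simpa using hadj, rfl⟩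

end Tanner

lemma localCheeger_le_div {V : Type*} [Fintype V] (G : SimpleGraph V) {ε : ℝ} {L : Finset V}
    (hL : L.Nonempty) (hLcard : (#L : ℝ) ≤ ε * Fintype.card V / 2) :
    localCheeger G ε ≤ #(edgeBoundary G L) / #L :=
  sInf_le ⟨L, hL, hLcard, rfl⟩

theorem stmt0_general {VQ VS : Type*} [Fintype VQ] [Fintype VS]
    (T : SimpleGraph (VQ ⊕ VS))
    -- `T` is bipartite with parts `V_Q` and `V_S`
    (hbip : ∀ a b, T.Adj a b → a.isLeft = b.isRight)
    (n r : ℕ) (hn : n = Fintype.card VQ) (hr : r = Fintype.card VS)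
    -- `Δ` is the maximum degree of `T`
    (Δ : ℕ)
    (hΔ : ∀ v, (Finset.univ.filter (fun u => T.Adj v u)).card ≤ Δ)
    (ε : ℝ)
    (ε' : ℝ) (hε' : ε' = (n + r : ℝ) * ε / ((1 + Δ : ℝ) * n)) :
    localCheeger (contractedGraph T) ε' ≥ localCheeger T ε / (Δ : ℝ≥0∞) := by
  refine le_sInf ?_
  rintro _ ⟨L, ⟨q₀, hq₀⟩, hLcard, rfl⟩
  set L' := L.disjSum (inrNeighborFinset T L)
  have hn0 : (0 : ℝ) < n := by
    rw [hn]; exact_mod_cast Fintype.card_pos_iff.mpr ⟨q₀⟩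
  have hL'card : (#L' : ℝ) ≤ ε * Fintype.card (VQ ⊕ VS) / 2 := calc
    (#L' : ℝ) ≤ (1 + Δ) * #L := by exact_mod_cast card_disjSum_inrNeighborFinset_le hΔ L
    _ ≤ (1 + Δ) * (ε' * n / 2) := by gcongr; rwa [hn]
    _ = ε * Fintype.card (VQ ⊕ VS) / 2 := by
      rw [hε', Fintype.card_sum, ← hn, ← hr]; push_cast; field_simp
  have hL' : L'.Nonempty := ⟨Sum.inl q₀, inl_mem_disjSum.mpr hq₀⟩
  apply ENNReal.div_le_of_le_mul
  calc localCheeger T ε ≤ #(edgeBoundary T L') / #L' := localCheeger_le_div T hL' hL'card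
    _ ≤ (Δ * #(edgeBoundary (contractedGraph T) L) : ℕ) / #L := by
      gcongr
      · exact card_edgeBoundary_disjSum_le hbip hΔ L
      · simp [L', card_disjSum]
    _ = #(edgeBoundary (contractedGraph T) L) / #L * Δ := by
      push_cast; rw [mul_comm, ENNReal.mul_div_right_comm]

theorem stmt0 {VQ VS : Type*} [Fintype VQ] [Fintype VS]
    (T : SimpleGraph (VQ ⊕ VS))
    -- `T` is bipartite with parts `V_Q` and `V_S`
    (hbip : ∀ a b, T.Adj a b → a.isLeft = b.isRight)
    (n r : ℕ) (hn : n = Fintype.card VQ) (hr : r = Fintype.card VS)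
    -- `Δ` is the maximum degree of `T`
    (Δ : ℕ)
    (hΔ : ∀ v, (Finset.univ.filter (fun u => T.Adj v u)).card ≤ Δ)
    (hΔmax : ∃ v, (Finset.univ.filter (fun u => T.Adj v u)).card = Δ)
    (ε : ℝ) (hε0 : 0 ≤ ε) (hε1 : ε ≤ 1)
    (ε' : ℝ) (hε' : ε' = (n + r : ℝ) * ε / ((1 + Δ : ℝ) * n)) :
    localCheeger (contractedGraph T) ε' ≥ localCheeger T ε / (Δ : ℝ≥0∞) :=
  stmt0_general T hbip n r hn hr Δ hΔ ε ε' hε'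
end

section
/- Let T be a bipartite graph with parts V_Q and V_S, maximum degree Δ, and let T̄ be the contracted graph on V_Q (two vertices adjacent iff they share a neighbor in V_S). For any subset L ⊆ V_Q, the boundary in T̄ satisfies |∂_{T̄} L| ≥ |∂_T (L ∪ N_T(L))| / Δ, where N_T(L) is the neighborhood of L in T. -/
/-!
STATEMENT 1: For a bipartite graph `T` with parts `V_Q` and `V_S` and maximum degree `Δ`,
with contracted graph `T̄` on `V_Q` (two vertices adjacent iff they share a neighbor in `V_S`),
and any `L ⊆ V_Q`, we have `|∂_{T̄} L| ≥ |∂_T (L ∪ N_T(L))| / Δ`,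
where `N_T(L)` is the neighborhood of `L` in `T` and `∂_G A` is the set of edges of `G`
with exactly one endpoint in `A`.
-/

attribute [local instance] Classical.propDecidable

open Finset

/-
Count boundary edges as oriented pairs (inside, outside). By bipartiteness, an edge of `T`
leaving `L ∪ N_T(L)` goes from some `s ∈ N_T(L)` to some `q ∉ L`, and `s` has a neighbour
`a ∈ L`, so `(a, q)` is an edge of `T̄` leaving `L`. A fixed `(a, q)` is reached from at most
`deg_T(a) ≤ Δ` pairs `(s, q)`, because each such `s` is a neighbour of `a`; double counting
gives `|∂_T (L ∪ N_T(L))| ≤ Δ |∂_{T̄} L|`.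
-/

open SimpleGraph

theorem card_edgeBoundary_eq_card_interedges {V : Type*} [Fintype V] [DecidableEq V]
    (G : SimpleGraph V) [DecidableRel G.Adj] (L : Finset V) :
    #(edgeBoundary G L) = #(G.interedges L Lᶜ) := by
  symm
  refine Finset.card_bij (fun p _ => s(p.1, p.2)) ?_ ?_ ?_
  · rintro ⟨a, b⟩ hab
    rw [mk_mem_interedges_iff, mem_compl] at hab
    simp only [edgeBoundary, mem_filter, mem_univ, true_and, mem_edgeSet]
    exact ⟨hab.2.2, a, b, rfl, hab.1, hab.2.1⟩
  · rintro ⟨a, b⟩ hab ⟨a', b'⟩ hab' h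
    rw [mk_mem_interedges_iff, mem_compl] at hab hab'
    rcases Sym2.eq_iff.mp h with ⟨rfl, rfl⟩ | ⟨rfl, rfl⟩
    · rfl
    · exact absurd hab.1 hab'.2.1
  · intro e he
    simp only [edgeBoundary, mem_filter, mem_univ, true_and] at he
    obtain ⟨hadj, a, b, rfl, ha, hb⟩ := he
    exact ⟨(a, b), (G.mk_mem_interedges_iff).mpr ⟨ha, mem_compl.mpr hb, hadj⟩, rfl⟩

namespace contractedGraph

variable {VQ VS : Type*} [Fintype VQ] [Fintype VS] (T : SimpleGraph (VQ ⊕ VS))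

noncomputable def rightNeighborFinset (L : Finset VQ) : Finset VS :=
  univ.filter fun s => ∃ q ∈ L, T.Adj (Sum.inl q) (Sum.inr s)

variable {T} [DecidableEq (VQ ⊕ VS)] [DecidableRel T.Adj]

theorem exists_of_mem_interedges_neighborhoodUnion
    (hbip : ∀ a b, T.Adj a b → a.isLeft = b.isRight) {L : Finset VQ} {x y : VQ ⊕ VS}
    (hxy : (x, y) ∈ T.interedges (L.image Sum.inl ∪ (rightNeighborFinset T L).image Sum.inr)
      (L.image Sum.inl ∪ (rightNeighborFinset T L).image Sum.inr)ᶜ) :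
    ∃ s q, x = Sum.inr s ∧ y = Sum.inl q ∧ q ∉ L ∧ ∃ a ∈ L, T.Adj (Sum.inl a) (Sum.inr s) := by
  rw [mk_mem_interedges_iff, mem_compl] at hxy
  obtain ⟨hx, hy, hadj⟩ := hxy
  have := hbip x y hadj
  rcases x with q | s <;> rcases y with q' | s' <;> simp_all [rightNeighborFinset]

theorem card_interedges_neighborhoodUnion_le
    (hbip : ∀ a b, T.Adj a b → a.isLeft = b.isRight) {Δ : ℕ}
    (hΔ : ∀ v, #(univ.filter fun u => T.Adj v u) ≤ Δ) (L : Finset VQ) :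
    #(T.interedges (L.image Sum.inl ∪ (rightNeighborFinset T L).image Sum.inr)
      (L.image Sum.inl ∪ (rightNeighborFinset T L).image Sum.inr)ᶜ) ≤
      Δ * #((contractedGraph T).interedges L Lᶜ) := by
  rw [mul_comm, ← mul_one #(T.interedges _ _)]
  refine card_mul_le_card_mul (fun (p : (VQ ⊕ VS) × (VQ ⊕ VS)) (e : VQ × VQ) =>
    p.2 = Sum.inl e.2 ∧ T.Adj (Sum.inl e.1) p.1) ?_ ?_
  · rintro ⟨x, y⟩ hxy
    obtain ⟨s, q, rfl, rfl, hq, a, ha, has⟩ := exists_of_mem_interedges_neighborhoodUnion hbip hxy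
    have hqs : T.Adj (Sum.inl q) (Sum.inr s) := ((T.mk_mem_interedges_iff).mp hxy).2.2.symm
    have haq : (contractedGraph T).Adj a q := ⟨fun h => hq (h ▸ ha), s, has, hqs⟩
    refine Nat.one_le_iff_ne_zero.mpr (card_pos.mpr ⟨(a, q), ?_⟩).ne'
    exact mem_filter.mpr ⟨(mk_mem_interedges_iff _).mpr ⟨ha, mem_compl.mpr hq, haq⟩, rfl, has⟩
  · rintro ⟨a, q⟩ -
    refine (card_le_card_of_injOn Prod.fst ?_ ?_).trans (hΔ (Sum.inl a))
    · intro p hp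
      simpa using (mem_filter.mp hp).2.2
    · intro p hp p' hp' h
      exact Prod.ext h (((mem_filter.mp hp).2.1).trans ((mem_filter.mp hp').2.1).symm)

end contractedGraph

theorem stmt1_general {VQ VS : Type*} [Fintype VQ] [Fintype VS]
    (T : SimpleGraph (VQ ⊕ VS))
    -- `T` is bipartite with parts `V_Q` and `V_S`
    (hbip : ∀ a b, T.Adj a b → a.isLeft = b.isRight)
    -- `Δ` is the maximum degree of `T`
    (Δ : ℕ)
    (hΔ : ∀ v, (Finset.univ.filter (fun u => T.Adj v u)).card ≤ Δ)
    (L : Finset VQ)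
    -- `N_T(L)`, the neighborhood of `L` in `T` (a subset of `V_S`)
    (NL : Finset VS)
    (hNL : NL = Finset.univ.filter (fun s => ∃ q ∈ L, T.Adj (Sum.inl q) (Sum.inr s))) :
    ((edgeBoundary (contractedGraph T) L).card : ℝ) ≥
      ((edgeBoundary T (L.image Sum.inl ∪ NL.image Sum.inr)).card : ℝ) / (Δ : ℝ) := by
  have hcard : #(edgeBoundary T (L.image Sum.inl ∪ NL.image Sum.inr)) ≤
      #(edgeBoundary (contractedGraph T) L) * Δ := by
    rw [card_edgeBoundary_eq_card_interedges, card_edgeBoundary_eq_card_interedges, mul_comm]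
    subst hNL
    exact contractedGraph.card_interedges_neighborhoodUnion_le hbip hΔ L
  exact div_le_of_le_mul₀ (Nat.cast_nonneg _) (Nat.cast_nonneg _) (by exact_mod_cast hcard)

theorem stmt1 {VQ VS : Type*} [Fintype VQ] [Fintype VS]
    (T : SimpleGraph (VQ ⊕ VS))
    -- `T` is bipartite with parts `V_Q` and `V_S`
    (hbip : ∀ a b, T.Adj a b → a.isLeft = b.isRight)
    -- `Δ` is the maximum degree of `T`
    (Δ : ℕ)
    (hΔ : ∀ v, (Finset.univ.filter (fun u => T.Adj v u)).card ≤ Δ)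
    (hΔmax : ∃ v, (Finset.univ.filter (fun u => T.Adj v u)).card = Δ)
    (L : Finset VQ)
    -- `N_T(L)`, the neighborhood of `L` in `T` (a subset of `V_S`)
    (NL : Finset VS)
    (hNL : NL = Finset.univ.filter (fun s => ∃ q ∈ L, T.Adj (Sum.inl q) (Sum.inr s))) :
    ((edgeBoundary (contractedGraph T) L).card : ℝ) ≥
      ((edgeBoundary T (L.image Sum.inl ∪ NL.image Sum.inr)).card : ℝ) / (Δ : ℝ) :=
  stmt1_general T hbip Δ hΔ L NL hNL
end

section
/- Let T̄ be a graph on a vertex set of size n with local Cheeger constant h_ε(T̄) ≥ α, arising as the contracted Tanner graph of Pauli operators of weight at most w. If L is a set of qubits of a circuit whose data-qubit part satisfies |D ∩ L| ≤ εn/2, then the number of measured operators supported on both sides of the cut satisfies n_cut ≥ (2α / (w(w−1)))·|D ∩ L|. -/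
/-!
STATEMENT 6: Let `T̄` be the contracted Tanner graph on `n` qubits of a family of Pauli
operators of weight at most `w` (modelled by their supports), and suppose the local Cheeger
constant satisfies `h_ε(T̄) ≥ α`, i.e. `|∂_{T̄} A| ≥ α|A|` for every `A` with `|A| ≤ εn/2`.
If `L` is a set of qubits of a circuit whose data-qubit part `D ∩ L` (modelled below by the
finset `DL` of data qubits in `L`) satisfies `|D ∩ L| ≤ εn/2`, then the number `n_cut` of
measured operators supported on both sides of the cut satisfies
`n_cut ≥ (2α / (w(w−1)))·|D ∩ L|`.
-/

attribute [local instance] Classical.propDecidable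

open Finset

/-- The contracted Tanner graph of a family of operators given by their supports. -/
noncomputable def contractedTanner {Q : Type*} {r : ℕ} (S : Fin r → Finset Q) :
    SimpleGraph Q :=
  SimpleGraph.fromRel (fun q q' => ∃ i, q ∈ S i ∧ q' ∈ S i)

noncomputable def cutOperators {Q : Type*} [DecidableEq Q] {r : ℕ} (S : Fin r → Finset Q)
    (L : Finset Q) : Finset (Fin r) :=
  univ.filter (fun i => (S i ∩ L).Nonempty ∧ (S i \ L).Nonempty)

theorem edgeBoundary_contractedTanner_subset {Q : Type*} [Fintype Q] [DecidableEq Q] {r : ℕ}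
    (S : Fin r → Finset Q) (L : Finset Q) :
    edgeBoundary (contractedTanner S) L ⊆
      (cutOperators S L).biUnion (fun i => (S i).offDiag.image Sym2.mk.uncurry) := by
  intro e he
  simp only [edgeBoundary, mem_filter, mem_univ, true_and] at he
  obtain ⟨hadj, a, b, rfl, haL, hbL⟩ := he
  rw [SimpleGraph.mem_edgeSet, contractedTanner, SimpleGraph.fromRel_adj] at hadj
  obtain ⟨hab, hrel⟩ := hadj
  obtain ⟨i, hai, hbi⟩ : ∃ i, a ∈ S i ∧ b ∈ S i := by
    rcases hrel with ⟨i, hai, hbi⟩ | ⟨i, hbi, hai⟩ <;> exact ⟨i, hai, hbi⟩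
  refine mem_biUnion.2 ⟨i, ?_, mem_image.2 ⟨(a, b), mem_offDiag.2 ⟨hai, hbi, hab⟩, rfl⟩⟩
  simp only [cutOperators, mem_filter, mem_univ, true_and]
  exact ⟨⟨a, mem_inter.2 ⟨hai, haL⟩⟩, ⟨b, mem_sdiff.2 ⟨hbi, hbL⟩⟩⟩

theorem card_edgeBoundary_contractedTanner_le {Q : Type*} [Fintype Q] [DecidableEq Q] {r w : ℕ}
    (S : Fin r → Finset Q) (hw : ∀ i, (S i).card ≤ w) (L : Finset Q) :
    (edgeBoundary (contractedTanner S) L).card ≤ (cutOperators S L).card * w.choose 2 :=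
  calc (edgeBoundary (contractedTanner S) L).card
      ≤ ((cutOperators S L).biUnion (fun i => (S i).offDiag.image Sym2.mk.uncurry)).card :=
        card_le_card (edgeBoundary_contractedTanner_subset S L)
    _ ≤ ∑ i ∈ cutOperators S L, ((S i).offDiag.image Sym2.mk.uncurry).card := card_biUnion_le
    _ ≤ ∑ _i ∈ cutOperators S L, w.choose 2 := sum_le_sum fun i _ => by
        rw [Sym2.card_image_offDiag]
        exact Nat.choose_le_choose 2 (hw i)
    _ = (cutOperators S L).card * w.choose 2 := by rw [sum_const, smul_eq_mul]

theorem stmt6_general (n r w : ℕ) (α ε : ℝ)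
    -- the supports of the measured Pauli operators, each of weight at most `w`
    (S : Fin r → Finset (Fin n))
    (hw : ∀ i, (S i).card ≤ w)
    -- local Cheeger constant bound `h_ε(T̄) ≥ α`
    (hexp : ∀ A : Finset (Fin n), (A.card : ℝ) ≤ ε * n / 2 →
      α * (A.card : ℝ) ≤ ((edgeBoundary (contractedTanner S) A).card : ℝ))
    -- `DL` is the data-qubit part `D ∩ L` of the cut
    (DL : Finset (Fin n)) (hDL : (DL.card : ℝ) ≤ ε * n / 2) :
    ((Finset.univ.filter
        (fun i : Fin r => (S i ∩ DL).Nonempty ∧ (S i \ DL).Nonempty)).card : ℝ)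
      ≥ (2 * α / ((w : ℝ) * ((w : ℝ) - 1))) * (DL.card : ℝ) := by
  change (2 * α / ((w : ℝ) * ((w : ℝ) - 1))) * (DL.card : ℝ) ≤ (cutOperators S DL).card
  have hboundary : α * DL.card ≤ (cutOperators S DL).card * ((w : ℝ) * (w - 1) / 2) := by
    rw [← Nat.cast_choose_two]
    have hcut := card_edgeBoundary_contractedTanner_le S hw DL
    exact_mod_cast (hexp DL hDL).trans (by exact_mod_cast hcut)
  have hpairs : 0 ≤ (w : ℝ) * (w - 1) := by
    rcases Nat.eq_zero_or_pos w with rfl | hw1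
    · simp
    · exact mul_nonneg w.cast_nonneg (sub_nonneg.2 (Nat.one_le_cast.2 hw1))
  rcases hpairs.eq_or_lt with hzero | hpos
  · -- `w ≤ 1`: the bound is `0` because `x / 0 = 0`
    simp [← hzero]
  · rw [div_mul_eq_mul_div, div_le_iff₀ hpos]
    linarith

theorem stmt6 (n r w : ℕ) (α ε : ℝ) (hα : 0 < α) (hε0 : 0 ≤ ε) (hε1 : ε ≤ 1)
    -- the supports of the measured Pauli operators, each of weight at most `w`
    (S : Fin r → Finset (Fin n))
    (hw : ∀ i, (S i).card ≤ w)
    -- local Cheeger constant bound `h_ε(T̄) ≥ α`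
    (hexp : ∀ A : Finset (Fin n), (A.card : ℝ) ≤ ε * n / 2 →
      α * (A.card : ℝ) ≤ ((edgeBoundary (contractedTanner S) A).card : ℝ))
    -- `DL` is the data-qubit part `D ∩ L` of the cut
    (DL : Finset (Fin n)) (hDL : (DL.card : ℝ) ≤ ε * n / 2) :
    ((Finset.univ.filter
        (fun i : Fin r => (S i ∩ DL).Nonempty ∧ (S i \ DL).Nonempty)).card : ℝ)
      ≥ (2 * α / ((w : ℝ) * ((w : ℝ) - 1))) * (DL.card : ℝ) :=
  stmt6_general n r w α ε S hw hexp DL hDL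
end

section
/- In the odd-even transposition sorting network in a grid, applied to a row of n distinct indices: after at most n rounds of compare-and-swap on alternating odd/even adjacent pairs, the sequence is sorted; consequently, tracing each index through the network yields n vertex-disjoint paths in the (2n−1) × (n+2) grid, each connecting the initial position of an index in the top row to its sorted position in the bottom row. -/
/-!
STATEMENT 16: Odd-even transposition sort applied to a row of `n` distinct indices sorts
the sequence after at most `n` rounds of compare-and-swap on alternating odd/even adjacent
pairs; moreover at every round each position holds exactly one of the original indices
(every intermediate row is a permutation of the input), which is what makes the `n` traced
paths through the `(2n−1) × (n+2)` grid vertex-disjoint, each connecting the initial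
position of an index in the top row to its sorted position in the bottom row.
-/

/-- One compare-and-swap round of odd-even transposition sort: pairs start at positions of
parity `p % 2` (0-indexed). Position `i` receives the min of the pair if it is the left
member and the max if it is the right member. -/
def oeStep {α : Type*} [LinearOrder α] (n : ℕ) (p : ℕ) (a : Fin n → α) : Fin n → α :=
  fun i =>
    if i.val % 2 = p % 2 then
      if h : i.val + 1 < n then min (a i) (a ⟨i.val + 1, h⟩) else a i
    else
      if 0 < i.val then
        max (a ⟨i.val - 1, lt_of_le_of_lt (Nat.sub_le _ _) i.isLt⟩) (a i)
      else a i

/-- The state of the row after `t` rounds of odd-even transposition sort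
(round `t` uses pairs starting at parity `t % 2`, so round 0 compares
positions (0,1),(2,3),…, round 1 compares (1,2),(3,4),…). -/
def oeIter {α : Type*} [LinearOrder α] (n : ℕ) (a : Fin n → α) : ℕ → (Fin n → α)
  | 0 => a
  | t + 1 => oeStep n t (oeIter n a t)

namespace OE

variable {α : Type*} [LinearOrder α]

/-- the permutation realized by one round -/
def permFun (n p : ℕ) (b : Fin n → α) : Fin n → Fin n := fun i =>
  if i.val % 2 = p % 2 then
    if h : i.val + 1 < n then
      (if b ⟨i.val + 1, h⟩ < b i then ⟨i.val + 1, h⟩ else i)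
    else i
  else
    if h : 0 < i.val then
      (if b i < b ⟨i.val - 1, lt_of_le_of_lt (Nat.sub_le _ _) i.isLt⟩ then
        ⟨i.val - 1, lt_of_le_of_lt (Nat.sub_le _ _) i.isLt⟩ else i)
    else i

lemma permFun_involutive (n p : ℕ) (b : Fin n → α) :
    Function.Involutive (permFun n p b) := by
  intro i
  unfold permFun
  by_cases hpar : i.val % 2 = p % 2
  · simp only [hpar, if_true]
    by_cases h : i.val + 1 < n
    · simp only [dif_pos h]
      by_cases hlt : b ⟨i.val + 1, h⟩ < b i
      · simp only [if_pos hlt]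
        have hpar2 : ¬ ((i.val + 1) % 2 = p % 2) := by omega
        simp only [hpar2, if_false]
        have h0 : 0 < i.val + 1 := Nat.succ_pos _
        simp only [dif_pos h0]
        have he : (⟨i.val + 1 - 1, lt_of_le_of_lt (Nat.sub_le _ _) (Fin.mk i.val.succ h).isLt⟩ :
            Fin n) = i := by ext; simp
        rw [he]
        simp [hlt]
      · simp [hpar, h, hlt]
    · simp [hpar, h]
  · simp only [hpar, if_false]
    by_cases h0 : 0 < i.val
    · simp only [dif_pos h0]
      by_cases hlt : b i < b ⟨i.val - 1, lt_of_le_of_lt (Nat.sub_le _ _) i.isLt⟩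
      · simp only [if_pos hlt]
        have hpar2 : (i.val - 1) % 2 = p % 2 := by omega
        simp only [hpar2, if_true]
        have h1 : i.val - 1 + 1 < n := by
          have := i.isLt; omega
        simp only [dif_pos h1]
        have he : (⟨i.val - 1 + 1, h1⟩ : Fin n) = i := by ext; simp; omega
        rw [he]
        simp [hlt]
      · simp [hpar, h0, hlt]
    · simp [hpar, h0]

def perm (n p : ℕ) (b : Fin n → α) : Equiv.Perm (Fin n) :=
  (permFun_involutive n p b).toPerm

lemma oeStep_eq_comp (n p : ℕ) (b : Fin n → α) :
    oeStep n p b = b ∘ (perm n p b) := by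
  funext i
  show oeStep n p b i = b (permFun n p b i)
  unfold oeStep permFun
  by_cases hpar : i.val % 2 = p % 2
  · simp only [hpar, if_true]
    by_cases h : i.val + 1 < n
    · simp only [dif_pos h]
      rcases lt_or_ge (b ⟨i.val + 1, h⟩) (b i) with hlt | hle
      · simp [hlt, min_eq_right hlt.le]
      · simp [not_lt.mpr hle, min_eq_left hle]
    · simp [h]
  · simp only [hpar, if_false]
    by_cases h0 : 0 < i.val
    · simp only [dif_pos h0, if_pos h0]
      rcases lt_or_ge (b i) (b ⟨i.val - 1, lt_of_le_of_lt (Nat.sub_le _ _) i.isLt⟩) with hlt | hle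
      · simp [hlt, max_eq_left hlt.le]
      · simp [not_lt.mpr hle, max_eq_right hle]
    · simp [h0]

lemma oeIter_perm (n : ℕ) (a : Fin n → α) (t : ℕ) :
    ∃ π : Equiv.Perm (Fin n), oeIter n a t = a ∘ π := by
  induction t with
  | zero => exact ⟨Equiv.refl _, rfl⟩
  | succ t ih =>
    obtain ⟨π, hπ⟩ := ih
    refine ⟨(perm n t (oeIter n a t)).trans π, ?_⟩
    show oeStep n t (oeIter n a t) = _
    rw [oeStep_eq_comp]
    funext i
    simp [hπ, Function.comp]



/-- number of `true`s at positions `≥ k` -/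
def cnt (n : ℕ) (s : Fin n → Bool) (k : ℕ) : ℕ :=
  ∑ i : Fin n, if k ≤ i.val ∧ s i = true then 1 else 0

lemma cnt_of_ge {n : ℕ} (s : Fin n → Bool) {k : ℕ} (h : n ≤ k) : cnt n s k = 0 := by
  unfold cnt
  apply Finset.sum_eq_zero
  intro i _
  have := i.isLt
  rw [if_neg]; rintro ⟨h1, -⟩; omega

lemma cnt_succ {n : ℕ} (s : Fin n → Bool) {k : ℕ} (h : k < n) :
    cnt n s k = (if s ⟨k, h⟩ = true then 1 else 0) + cnt n s (k + 1) := by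
  unfold cnt
  have e1 : ∀ i : Fin n, (if k ≤ i.val ∧ s i = true then 1 else 0)
      = (if i = (⟨k, h⟩ : Fin n) then (if s ⟨k, h⟩ = true then 1 else 0) else 0)
        + (if k + 1 ≤ i.val ∧ s i = true then 1 else 0) := by
    intro i
    by_cases hi : i = (⟨k, h⟩ : Fin n)
    · subst hi
      simp only [if_pos rfl]
      by_cases hs : s (⟨k, h⟩ : Fin n) = true <;> simp [hs]
    · have hv : ¬ i.val = k := fun hv => hi (Fin.ext hv)
      simp only [if_neg hi, zero_add]
      by_cases hs : s i = true
      · simp only [hs, and_true]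
        have hiff : k ≤ i.val ↔ k + 1 ≤ i.val := by omega
        simp only [hiff]
      · simp [hs]
  rw [Finset.sum_congr rfl (fun i _ => e1 i), Finset.sum_add_distrib,
    Finset.sum_ite_eq' Finset.univ (⟨k, h⟩ : Fin n)]
  simp

lemma cnt_antitone {n : ℕ} (s : Fin n → Bool) : Antitone (cnt n s) := by
  intro k k' hk
  unfold cnt
  apply Finset.sum_le_sum
  intro i _
  split_ifs with h1 h2
  · exact le_rfl
  · exact absurd ⟨le_trans hk h1.1, h1.2⟩ h2
  · exact Nat.zero_le _
  · exact Nat.zero_le _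

lemma cnt_le_aux {n : ℕ} (s : Fin n → Bool) :
    ∀ d k, n - k ≤ d → cnt n s k ≤ n - k := by
  intro d
  induction d with
  | zero => intro k hk; rw [cnt_of_ge s (by omega)]; omega
  | succ d ih =>
    intro k hk
    rcases le_or_gt n k with h | h
    · rw [cnt_of_ge s h]; omega
    · rw [cnt_succ s h]
      have := ih (k + 1) (by omega)
      split_ifs <;> omega

lemma cnt_le {n : ℕ} (s : Fin n → Bool) (k : ℕ) : cnt n s k ≤ n - k :=
  cnt_le_aux s (n - k) k le_rfl

lemma cnt_ge {n : ℕ} (s : Fin n → Bool) (k : ℕ) : cnt n s 0 ≤ cnt n s k + k := by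
  induction k with
  | zero => simp
  | succ k ih =>
    rcases lt_or_ge k n with hk | hk
    · have := cnt_succ s hk
      split_ifs at this <;> omega
    · have h1 : cnt n s k = 0 := cnt_of_ge s hk
      have h2 : cnt n s (k+1) = 0 := cnt_of_ge s (by omega)
      omega

lemma oeStep_left {α : Type*} [LinearOrder α] {n p : ℕ} (s : Fin n → α) {k : ℕ}
    (hpar : k % 2 = p % 2) (h : k + 1 < n) :
    oeStep n p s ⟨k, by omega⟩ = min (s ⟨k, by omega⟩) (s ⟨k + 1, h⟩) := by
  simp [oeStep, hpar, h]

lemma oeStep_left_end {α : Type*} [LinearOrder α] {n p : ℕ} (s : Fin n → α) {k : ℕ}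
    (hpar : k % 2 = p % 2) (hk : k < n) (h : ¬ k + 1 < n) :
    oeStep n p s ⟨k, hk⟩ = s ⟨k, hk⟩ := by
  simp [oeStep, hpar, h]

lemma oeStep_right {α : Type*} [LinearOrder α] {n p : ℕ} (s : Fin n → α) {k : ℕ}
    (hpar : ¬ k % 2 = p % 2) (h0 : 0 < k) (hk : k < n) :
    oeStep n p s ⟨k, hk⟩ = max (s ⟨k - 1, by omega⟩) (s ⟨k, hk⟩) := by
  simp [oeStep, hpar, h0]

lemma oeStep_zero {α : Type*} [LinearOrder α] {n p : ℕ} (s : Fin n → α) {k : ℕ}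
    (hpar : ¬ k % 2 = p % 2) (h0 : ¬ 0 < k) (hk : k < n) :
    oeStep n p s ⟨k, hk⟩ = s ⟨k, hk⟩ := by
  simp [oeStep, hpar, h0]

lemma bool_min_max (x y : Bool) :
    ((if min x y = true then 1 else 0) + (if max x y = true then 1 else 0) : ℕ)
      = (if x = true then 1 else 0) + (if y = true then 1 else 0) := by
  cases x <;> cases y <;> simp

lemma step_mono_aux {n p : ℕ} (s : Fin n → Bool) :
    ∀ d k, n - k ≤ d → cnt n s k ≤ cnt n (oeStep n p s) k := by
  intro d
  induction d with
  | zero => intro k hk; rw [cnt_of_ge s (by omega), cnt_of_ge _ (by omega)]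
  | succ d ih =>
    intro k hk
    rcases le_or_gt n k with h | h
    · rw [cnt_of_ge s h, cnt_of_ge _ h]
    · by_cases hpar : k % 2 = p % 2
      · by_cases h1 : k + 1 < n
        · -- two-step case
          rw [cnt_succ s h, cnt_succ s h1, cnt_succ _ h, cnt_succ _ h1]
          rw [oeStep_left s hpar h1, oeStep_right s (by omega) (by omega) h1]
          have hsub : (⟨k + 1 - 1, by omega⟩ : Fin n) = ⟨k, h⟩ := by ext; simp
          rw [hsub]
          have h2 := ih (k + 2) (by omega)
          have hmm := bool_min_max (s ⟨k, h⟩) (s ⟨k + 1, h1⟩)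
          have e12 : k + 1 + 1 = k + 2 := by omega
          rw [e12]
          omega
        · rw [cnt_succ s h, cnt_succ _ h, oeStep_left_end s hpar h h1]
          have h2 := ih (k + 1) (by omega)
          omega
      · by_cases h0 : 0 < k
        · rw [cnt_succ s h, cnt_succ _ h, oeStep_right s hpar h0 h]
          have h2 := ih (k + 1) (by omega)
          have hb : (if s ⟨k, h⟩ = true then 1 else 0)
              ≤ (if max (s ⟨k - 1, by omega⟩) (s ⟨k, h⟩) = true then (1:ℕ) else 0) := by
            cases hx : s ⟨k - 1, by omega⟩ <;> cases hy : s ⟨k, h⟩ <;> simp [hx, hy]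
          omega
        · rw [cnt_succ s h, cnt_succ _ h, oeStep_zero s hpar h0 h]
          have h2 := ih (k + 1) (by omega)
          omega

lemma step_mono {n p : ℕ} (s : Fin n → Bool) (k : ℕ) :
    cnt n s k ≤ cnt n (oeStep n p s) k :=
  step_mono_aux s (n - k) k le_rfl

lemma step_move {n p : ℕ} (s : Fin n → Bool) {v : ℕ} (hv1 : v + 1 < n)
    (hpar : v % 2 = p % 2) (htrue : s ⟨v, by omega⟩ = true)
    (hfalse : s ⟨v + 1, hv1⟩ = false) :
    cnt n s (v + 1) + 1 ≤ cnt n (oeStep n p s) (v + 1) := by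
  rw [cnt_succ s hv1, cnt_succ _ hv1]
  rw [oeStep_right s (by omega) (by omega) hv1]
  have hsub : (⟨v + 1 - 1, by omega⟩ : Fin n) = ⟨v, by omega⟩ := by ext; simp
  rw [hsub, htrue, hfalse]
  have h2 := step_mono (p := p) s (v + 2)
  have e12 : v + 1 + 1 = v + 2 := by omega
  rw [e12]
  simp only [max_eq_left (by simp : (false : Bool) ≤ true), if_pos rfl]
  norm_num
  omega

lemma cnt_comp_perm {n : ℕ} (s : Fin n → Bool) (π : Equiv.Perm (Fin n)) :
    cnt n (s ∘ π) 0 = cnt n s 0 := by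
  unfold cnt
  simp only [Nat.zero_le, true_and, Function.comp]
  exact Equiv.sum_comp π (fun i => if s i = true then 1 else 0)

lemma cnt_iter_zero {n : ℕ} (b : Fin n → Bool) (t : ℕ) :
    cnt n (oeIter n b t) 0 = cnt n b 0 := by
  obtain ⟨π, hπ⟩ := oeIter_perm n b t
  rw [hπ, cnt_comp_perm]

lemma key (n : ℕ) (b : Fin n → Bool) :
    ∀ t, ∀ j, 1 ≤ j → j ≤ cnt n b 0 →
      j ≤ cnt n (oeIter n b t) (min (n - j) (cnt n b 0 + t + cnt n b 0 % 2 - 2 * j)) := by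
  intro t
  induction t with
  | zero =>
    intro j hj1 hjm
    set x := min (n - j) (cnt n b 0 + 0 + cnt n b 0 % 2 - 2 * j) with hx
    have hx2 : x ≤ cnt n b 0 + 0 + cnt n b 0 % 2 - 2 * j := min_le_right _ _
    have hge := cnt_ge b x
    show j ≤ cnt n b x
    omega
  | succ t ih =>
    intro j hj1 hjm
    have hstep : oeIter n b (t + 1) = oeStep n t (oeIter n b t) := rfl
    set S := oeIter n b t with hS
    set m := cnt n b 0 with hm
    by_cases hB : m + t + 1 + m % 2 ≤ 2 * j
    · -- degenerate: threshold is 0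
      have hz : m + (t + 1) + m % 2 - 2 * j = 0 := by omega
      rw [hz, Nat.min_zero]
      have htot : cnt n (oeIter n b (t + 1)) 0 = m := cnt_iter_zero b (t + 1)
      omega
    · set A := m + t + m % 2 - 2 * j with hA
      have hAe : A + 1 = m + (t + 1) + m % 2 - 2 * j := by omega
      by_cases hnj : n - j ≤ A
      · -- threshold clipped at n - j
        have h1 := ih j hj1 hjm
        have h2 : min (n - j) (m + t + m % 2 - 2 * j) = n - j := by omega
        have h3 : min (n - j) (m + (t + 1) + m % 2 - 2 * j) = n - j := by omega
        rw [h3, hstep]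
        rw [h2] at h1
        exact le_trans h1 (step_mono S (n - j))
      · have h1 := ih j hj1 hjm
        have h2 : min (n - j) (m + t + m % 2 - 2 * j) = A := by omega
        rw [h2] at h1
        -- h1 : j ≤ cnt n S A
        have hfinish : j ≤ cnt n (oeStep n t S) (A + 1) → _root_.True := fun _ => trivial
        have hgoal : ∀ _ : j ≤ cnt n (oeStep n t S) (A + 1),
            j ≤ cnt n (oeIter n b (t + 1))
              (min (n - j) (m + (t + 1) + m % 2 - 2 * j)) := by
          intro hh
          rw [hstep]
          have hmin : min (n - j) (m + (t + 1) + m % 2 - 2 * j) ≤ A + 1 := by omega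
          exact le_trans hh (cnt_antitone _ hmin)
        by_cases hc : j ≤ cnt n S (A + 1)
        · exact hgoal (le_trans hc (step_mono S (A + 1)))
        · -- equality case: the j-th one sits exactly at A and must move
          have hA_lt : A < n := by omega
          have hA1_lt : A + 1 < n := by omega
          have hd1 := cnt_succ S hA_lt
          -- S ⟨A⟩ = true
          have hSA : S ⟨A, hA_lt⟩ = true := by
            by_contra hno
            simp only [hno] at hd1
            simp at hd1
            omega
          rw [if_pos hSA] at hd1
          -- cnt S (A+1) = j - 1
          have hcA1 : cnt n S (A + 1) = j - 1 := by omega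
          -- S ⟨A+1⟩ = false
          have hd2 := cnt_succ S hA1_lt
          have e12 : A + 1 + 1 = A + 2 := by omega
          rw [e12] at hd2
          have hSA1 : S ⟨A + 1, hA1_lt⟩ = false := by
            rcases Nat.eq_or_lt_of_le hj1 with hj1' | hj2
            · -- j = 1 : no ones above position A at all
              by_contra hno
              simp only [Bool.not_eq_false] at hno
              rw [if_pos hno] at hd2
              omega
            · -- j ≥ 2 : use IH for j - 1
              have hih := ih (j - 1) (by omega) (by omega)
              have h3 : min (n - (j - 1)) (m + t + m % 2 - 2 * (j - 1)) = A + 2 := by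
                omega
              rw [h3] at hih
              by_contra hno
              simp only [Bool.not_eq_false] at hno
              rw [if_pos hno] at hd2
              omega
          have hpar : A % 2 = t % 2 := by omega
          have hmv := step_move (p := t) S hA1_lt hpar hSA hSA1
          exact hgoal (by omega)

lemma bool_char (n : ℕ) (b : Fin n → Bool) (i : Fin n) :
    oeIter n b n i = true ↔ n - cnt n b 0 ≤ i.val := by
  set m := cnt n b 0 with hm
  set s := oeIter n b n with hs
  have hmn : m ≤ n := by have := cnt_le b 0; omega
  have hcj : ∀ j, 1 ≤ j → j ≤ m → cnt n s (n - j) = j := by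
    intro j hj1 hjm
    have h1 := key n b n j hj1 (by omega)
    have hmin : min (n - j) (cnt n b 0 + n + cnt n b 0 % 2 - 2 * j) = n - j := by
      rw [min_eq_left]; omega
    rw [hmin, ← hs] at h1
    have h2 := cnt_le s (n - j)
    have h3 : n - (n - j) = j := by omega
    rw [h3] at h2
    omega
  constructor
  · intro htrue
    by_contra hno
    push_neg at hno
    -- i.val < n - m ≤ n, so m < n
    have hi1 : i.val + 1 ≤ n - m := by omega
    have hup : m ≤ cnt n s (i.val + 1) := by
      rcases Nat.eq_zero_or_pos m with h0 | h0
      · omega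
      · have := hcj m h0 le_rfl
        have := cnt_antitone s hi1
        omega
    have htop : cnt n s 0 = m := cnt_iter_zero b n
    have hle : cnt n s i.val ≤ m := by
      have := cnt_antitone s (Nat.zero_le i.val)
      omega
    have hd := cnt_succ s i.isLt
    rw [if_pos htrue] at hd
    omega
  · intro hge
    have hiv : i.val < n := i.isLt
    set j := n - i.val with hj
    have hj1 : 1 ≤ j := by omega
    have hjm : j ≤ m := by omega
    have hij : i.val = n - j := by omega
    have h1 := hcj j hj1 hjm
    have h2 : cnt n s (n - j + 1) = j - 1 := by
      rcases Nat.lt_or_ge 1 j with h | h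
      · have := hcj (j - 1) (by omega) (by omega)
        have he : n - (j - 1) = n - j + 1 := by omega
        rw [he] at this
        exact this
      · have hj1' : j = 1 := by omega
        have he : n - j + 1 = n := by omega
        rw [he, cnt_of_ge s le_rfl]
        omega
    have hlt : n - j < n := by omega
    have hd := cnt_succ s hlt
    have hie : i = ⟨n - j, hlt⟩ := Fin.ext hij
    rw [hie]
    by_contra hno
    simp only [Bool.not_eq_true] at hno
    rw [hno] at hd
    simp at hd
    omega

lemma bool_sorted (n : ℕ) (b : Fin n → Bool) : Monotone (oeIter n b n) := by
  intro i i' hii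
  cases hsi : oeIter n b n i with
  | false => exact Bool.false_le _
  | true =>
    have h1 := (bool_char n b i).mp hsi
    have h2 : oeIter n b n i' = true := by
      rw [bool_char]
      have : i.val ≤ i'.val := hii
      omega
    rw [h2]

lemma oeStep_comp_mono {α β : Type*} [LinearOrder α] [LinearOrder β]
    {f : α → β} (hf : Monotone f) (n p : ℕ) (s : Fin n → α) :
    oeStep n p (f ∘ s) = f ∘ oeStep n p s := by
  funext i
  simp only [oeStep, Function.comp]
  split_ifs <;> simp [hf.map_min, hf.map_max]

lemma oeIter_comp_mono {α β : Type*} [LinearOrder α] [LinearOrder β]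
    {f : α → β} (hf : Monotone f) (n : ℕ) (a : Fin n → α) (t : ℕ) :
    oeIter n (f ∘ a) t = f ∘ oeIter n a t := by
  induction t with
  | zero => rfl
  | succ t ih =>
    show oeStep n t (oeIter n (f ∘ a) t) = f ∘ oeStep n t (oeIter n a t)
    rw [ih, oeStep_comp_mono hf]

end OE

theorem stmt16 (n : ℕ) (a : Fin n → ℕ) (hdistinct : Function.Injective a) :
    -- after at most `n` rounds the row is sorted …
    Monotone (oeIter n a n) ∧
    -- … and at each round every position holds exactly one of the indices:
    -- each intermediate row is the input row rearranged by a permutation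
    -- (this yields the `n` vertex-disjoint traced paths in the grid)
    ∀ t : ℕ, ∃ π : Equiv.Perm (Fin n), oeIter n a t = a ∘ π := by
  refine ⟨?_, fun t => OE.oeIter_perm n a t⟩
  by_contra hmono
  rw [Monotone] at hmono
  push_neg at hmono
  obtain ⟨i, i', hii, hlt⟩ := hmono
  set c := oeIter n a n with hc
  set f : ℕ → Bool := fun x => decide (c i ≤ x) with hf
  have hfm : Monotone f := by
    intro x y hxy
    simp only [hf]
    by_cases hx : c i ≤ x
    · simp [hx, le_trans hx hxy]
    · simp [hx]
  have hcomm := OE.oeIter_comp_mono hfm n a n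
  have hbs := OE.bool_sorted n (f ∘ a)
  rw [hcomm] at hbs
  have := hbs hii
  simp only [Function.comp, hf, ← hc] at this
  have h1 : decide (c i ≤ c i) = true := by simp
  have h2 : decide (c i ≤ c i') = false := by simp; omega
  rw [h1, h2] at this
  exact absurd this (by simp)
end
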